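/- arXiv:1905.04193 — 5 statements merged into one kernel-verified Lean document; each statement's English description precedes it below -/
import Mathlib

section
/- Let g : ℂ → ℂ be analytic on the region |s| ≥ 3/2, and suppose there are a positive integer d, a real α > 0 and a constant C > 0 such that max_{|s|=r} |g(s)| ≤ C Γ(r)^{d}/α^{r} for all r ≥ 3/2. Then there is a constant C' > 0 such that for every nonnegative integer k and every real r ≥ 2, max_{|s|=r} |g^{(k)}(s)|/k! ≤ C' · 2^{k+1} · Γ(r+1)^{d}/α^{r}. -/
/-! The circle `|w - s| = 1/2` around a point with `|s| = r ≥ 2` lies in the annulus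
`r - 1/2 ≤ |w| ≤ r + 1/2`, where the growth hypothesis bounds `g` by a constant multiple of
`Γ(r+1)^d / α^r`: `Γ` is controlled by monotonicity, and `α^{-|w|} = α^{r-|w|} α^{-r}` with
`|r - |w|| ≤ 1/2`. Cauchy's estimate on that circle then gives `|g^{(k)}(s)| / k! ≤ 2^k` times
this bound. -/

lemma Real.Gamma_le_Gamma_of_le {x y : ℝ} (hx : 1 ≤ x) (hy : 2 ≤ y) (hxy : x ≤ y) :
    Real.Gamma x ≤ Real.Gamma y := by
  have hmono := Real.Gamma_strictMonoOn_Ici.monotoneOn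
  rcases le_total 2 x with h2x | hx2
  · exact hmono h2x hy hxy
  · calc Real.Gamma x ≤ max (Real.Gamma 1) (Real.Gamma 2) :=
          Real.convexOn_Gamma.le_max_of_mem_Icc (by norm_num) (by norm_num) ⟨hx, hx2⟩
      _ = Real.Gamma 2 := by simp
      _ ≤ Real.Gamma y := hmono (le_refl (2 : ℝ)) hy hy

lemma Real.rpow_le_max_of_abs_le {α a u : ℝ} (hα : 0 < α) (hu : |u| ≤ a) :
    α ^ u ≤ max (α ^ a) (α ^ (-a)) := by
  rcases le_total 1 α with h1 | h1
  · exact (Real.rpow_le_rpow_of_exponent_le h1 (le_of_abs_le hu)).trans (le_max_left _ _)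
  · exact (Real.rpow_le_rpow_of_exponent_ge hα h1 (neg_le_of_abs_le hu)).trans
      (le_max_right _ _)

lemma norm_le_of_norm_sub_le_half_of_growth {g : ℂ → ℂ} {d : ℕ} {α C : ℝ} (hα : 0 < α)
    (hC : 0 ≤ C)
    (hgrowth : ∀ r : ℝ, 3 / 2 ≤ r → ∀ s : ℂ, ‖s‖ = r → ‖g s‖ ≤ C * Real.Gamma r ^ d / α ^ r)
    {s w : ℂ} (hs : 2 ≤ ‖s‖) (hw : ‖w - s‖ ≤ 1 / 2) :
    ‖g w‖ ≤ C * max (α ^ (1 / 2 : ℝ)) (α ^ (-(1 / 2) : ℝ)) * Real.Gamma (‖s‖ + 1) ^ d /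
      α ^ ‖s‖ := by
  have hdist : |‖s‖ - ‖w‖| ≤ 1 / 2 :=
    (abs_norm_sub_norm_le s w).trans (by rwa [norm_sub_rev])
  have hw_lo : ‖s‖ - 1 / 2 ≤ ‖w‖ := by linarith [le_abs_self (‖s‖ - ‖w‖)]
  have hw_hi : ‖w‖ ≤ ‖s‖ + 1 / 2 := by linarith [neg_abs_le (‖s‖ - ‖w‖)]
  have hΓ : Real.Gamma ‖w‖ ^ d ≤ Real.Gamma (‖s‖ + 1) ^ d :=
    pow_le_pow_left₀ (Real.Gamma_pos_of_pos (by linarith)).le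
      (Real.Gamma_le_Gamma_of_le (by linarith) (by linarith) (by linarith)) d
  have hpow : α ^ ‖w‖ * α ^ (‖s‖ - ‖w‖) = α ^ ‖s‖ := by
    rw [← Real.rpow_add hα, add_sub_cancel]
  calc ‖g w‖ ≤ C * Real.Gamma ‖w‖ ^ d / α ^ ‖w‖ := hgrowth ‖w‖ (by linarith) w rfl
    _ = C * α ^ (‖s‖ - ‖w‖) * Real.Gamma ‖w‖ ^ d / α ^ ‖s‖ := by
        rw [← hpow]
        field_simp [(Real.rpow_pos_of_pos hα (‖s‖ - ‖w‖)).ne']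
    _ ≤ C * max (α ^ (1 / 2 : ℝ)) (α ^ (-(1 / 2) : ℝ)) * Real.Gamma (‖s‖ + 1) ^ d /
          α ^ ‖s‖ := by
        gcongr
        exact Real.rpow_le_max_of_abs_le hα hdist

theorem derivative_growth_bound_general (g : ℂ → ℂ)
    (hg : ∀ s : ℂ, 3 / 2 ≤ ‖s‖ → AnalyticAt ℂ g s)
    (d : ℕ) (α : ℝ) (hα : 0 < α) (C : ℝ) (hC : 0 < C)
    (hgrowth : ∀ r : ℝ, 3 / 2 ≤ r → ∀ s : ℂ, ‖s‖ = r →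
      ‖g s‖ ≤ C * Real.Gamma r ^ d / α ^ r) :
    ∃ C' : ℝ, 0 < C' ∧ ∀ k : ℕ, ∀ r : ℝ, 2 ≤ r → ∀ s : ℂ, ‖s‖ = r →
      ‖iteratedDeriv k g s‖ / (Nat.factorial k) ≤
        C' * 2 ^ (k + 1) * Real.Gamma (r + 1) ^ d / α ^ r := by
  set m := max (α ^ (1 / 2 : ℝ)) (α ^ (-(1 / 2) : ℝ))
  have hm : 0 < m := lt_max_of_lt_left (Real.rpow_pos_of_pos hα _)
  refine ⟨C * m, mul_pos hC hm, fun k r hr s hs => ?_⟩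
  subst hs
  set M := C * m * Real.Gamma (‖s‖ + 1) ^ d / α ^ ‖s‖
  have hM : 0 ≤ M := by positivity
  have hdiff : DiffContOnCl ℂ g (Metric.ball s (1 / 2)) := by
    refine DifferentiableOn.diffContOnCl_ball (U := {w | 3 / 2 ≤ ‖w‖})
      (fun w hw => (hg w hw).differentiableAt.differentiableWithinAt) fun w hw => ?_
    show 3 / 2 ≤ ‖w‖
    linarith [norm_sub_norm_le s w, mem_closedBall_iff_norm'.1 hw]
  have hcauchy : ‖iteratedDeriv k g s‖ ≤ k.factorial * M / (1 / 2) ^ k :=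
    Complex.norm_iteratedDeriv_le_of_forall_mem_sphere_norm_le k (by norm_num) hdiff fun w hw =>
      norm_le_of_norm_sub_le_half_of_growth hα hC.le hgrowth hr (mem_sphere_iff_norm.1 hw).le
  have hk : (0 : ℝ) < k.factorial := by exact_mod_cast k.factorial_pos
  calc ‖iteratedDeriv k g s‖ / k.factorial ≤ M * 2 ^ k := by
        rw [div_le_iff₀ hk]
        refine hcauchy.trans_eq ?_
        rw [one_div, inv_pow, div_inv_eq_mul]
        ring
    _ ≤ M * 2 ^ (k + 1) := by gcongr <;> norm_num
    _ = C * m * 2 ^ (k + 1) * Real.Gamma (‖s‖ + 1) ^ d / α ^ ‖s‖ := by ring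

/-- Bounds on derivatives from the growth condition: if `g` is analytic on `|s| ≥ 3/2`
and `max_{|s|=r} |g(s)| ≤ C Γ(r)^d / α^r` for `r ≥ 3/2`, then
`max_{|s|=r} |g^{(k)}(s)|/k! ≤ C' 2^{k+1} Γ(r+1)^d / α^r` for all `k` and `r ≥ 2`. -/
theorem derivative_growth_bound (g : ℂ → ℂ)
    (hg : ∀ s : ℂ, 3 / 2 ≤ ‖s‖ → AnalyticAt ℂ g s)
    (d : ℕ) (hd : 0 < d) (α : ℝ) (hα : 0 < α) (C : ℝ) (hC : 0 < C)
    (hgrowth : ∀ r : ℝ, 3 / 2 ≤ r → ∀ s : ℂ, ‖s‖ = r →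
      ‖g s‖ ≤ C * Real.Gamma r ^ d / α ^ r) :
    ∃ C' : ℝ, 0 < C' ∧ ∀ k : ℕ, ∀ r : ℝ, 2 ≤ r → ∀ s : ℂ, ‖s‖ = r →
      ‖iteratedDeriv k g s‖ / (Nat.factorial k) ≤
        C' * 2 ^ (k + 1) * Real.Gamma (r + 1) ^ d / α ^ r :=
  derivative_growth_bound_general g hg d α hα C hC hgrowth
end

section
/- There is a constant C > 0 such that for every real σ ≥ 2, ∫_{−∞}^{∞} |Γ(σ + 2 + it)| dt ≤ C σ^3 Γ(σ). -/
/-!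
On the line `Re s = a > 0` one has `‖Γ(s)‖ ≤ Γ(a)` from the Euler integral, so two steps of
`Γ(s + 1) = s Γ(s)` give `‖Γ(s)‖ ≤ Γ(a + 2) / ‖s‖² = Γ(a + 2) / (a² + t²)`, whose integral over
the line is `π Γ(a + 2) / a`. For `a = σ + 2` this is `π (σ + 3) (σ + 1) σ Γ(σ) ≤ 4π σ³ Γ(σ)`.
-/

open MeasureTheory
open scoped Real

lemma inv_sq_add_sq_eq_inv_sq_mul {a : ℝ} (ha : a ≠ 0) (t : ℝ) :
    (a ^ 2 + t ^ 2)⁻¹ = (a ^ 2)⁻¹ * (1 + (t / a) ^ 2)⁻¹ := by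
  field_simp

lemma integrable_inv_sq_add_sq {a : ℝ} (ha : a ≠ 0) :
    Integrable fun t : ℝ ↦ (a ^ 2 + t ^ 2)⁻¹ := by
  simp_rw [inv_sq_add_sq_eq_inv_sq_mul ha]
  exact (integrable_inv_one_add_sq.comp_div ha).const_mul _

lemma integral_univ_inv_sq_add_sq {a : ℝ} (ha : 0 < a) :
    ∫ t : ℝ, (a ^ 2 + t ^ 2)⁻¹ = π / a := by
  simp_rw [inv_sq_add_sq_eq_inv_sq_mul ha.ne', integral_const_mul,
    Measure.integral_comp_div (fun x : ℝ ↦ (1 + x ^ 2)⁻¹), integral_univ_inv_one_add_sq,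
    smul_eq_mul, abs_of_pos ha]
  field_simp

namespace Complex

lemma norm_Gamma_le_Gamma_re {s : ℂ} (hs : 0 < s.re) : ‖Gamma s‖ ≤ Real.Gamma s.re := by
  rw [Gamma_eq_integral hs, Real.Gamma_eq_integral hs, GammaIntegral]
  refine (norm_integral_le_integral_norm _).trans_eq <|
    setIntegral_congr_fun measurableSet_Ioi fun x hx ↦ ?_
  rw [norm_mul, norm_real, norm_cpow_eq_rpow_re_of_pos hx, Real.norm_of_nonneg (Real.exp_pos _).le]
  simp

lemma norm_le_norm_add_one {s : ℂ} (hs : -(1 / 2) ≤ s.re) : ‖s‖ ≤ ‖s + 1‖ := by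
  rw [← sq_le_sq₀ (norm_nonneg _) (norm_nonneg _), Complex.sq_norm, Complex.sq_norm,
    normSq_apply, normSq_apply]
  simp only [add_re, one_re, add_im, one_im, add_zero]
  nlinarith

lemma norm_Gamma_le_Gamma_re_add_two_div_norm_sq {s : ℂ} (hs : 0 < s.re) :
    ‖Gamma s‖ ≤ Real.Gamma (s.re + 2) / ‖s‖ ^ 2 := by
  have hs0 : s ≠ 0 := fun h ↦ by simp [h] at hs
  have hs1 : s + 1 ≠ 0 := fun h ↦ by
    have := congrArg re h
    simp only [add_re, one_re, zero_re] at this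
    linarith
  have hrec : Gamma (s + 2) = (s + 1) * s * Gamma s := by
    rw [show s + 2 = s + 1 + 1 by ring, Gamma_add_one _ hs1, Gamma_add_one _ hs0]; ring
  have hGamma2 : ‖Gamma (s + 2)‖ ≤ Real.Gamma (s.re + 2) := by
    simpa using norm_Gamma_le_Gamma_re (s := s + 2) (by simp only [add_re, re_ofNat]; linarith)
  rw [le_div_iff₀ (by positivity)]
  calc ‖Gamma s‖ * ‖s‖ ^ 2 = ‖s‖ * ‖s‖ * ‖Gamma s‖ := by ring
    _ ≤ ‖s + 1‖ * ‖s‖ * ‖Gamma s‖ := by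
      gcongr
      exact norm_le_norm_add_one (by linarith)
    _ = ‖Gamma (s + 2)‖ := by rw [hrec, norm_mul, norm_mul]
    _ ≤ Real.Gamma (s.re + 2) := hGamma2

lemma integral_norm_Gamma_vertical_le {a : ℝ} (ha : 0 < a) :
    ∫ t : ℝ, ‖Gamma (a + t * I)‖ ≤ Real.Gamma (a + 2) * (π / a) := by
  have hbound (t : ℝ) : ‖Gamma (a + t * I)‖ ≤ Real.Gamma (a + 2) * (a ^ 2 + t ^ 2)⁻¹ := by
    simpa [Complex.sq_norm, normSq_add_mul_I, div_eq_mul_inv] using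
      norm_Gamma_le_Gamma_re_add_two_div_norm_sq (s := a + t * I) (by simpa using ha)
  calc ∫ t : ℝ, ‖Gamma (a + t * I)‖
      ≤ ∫ t : ℝ, Real.Gamma (a + 2) * (a ^ 2 + t ^ 2)⁻¹ :=
        integral_mono_of_nonneg (.of_forall fun _ ↦ norm_nonneg _)
          ((integrable_inv_sq_add_sq ha.ne').const_mul _) (.of_forall hbound)
    _ = Real.Gamma (a + 2) * (π / a) := by
        rw [integral_const_mul, integral_univ_inv_sq_add_sq ha]

end Complex

lemma Real.Gamma_add_four {s : ℝ} (hs : 0 < s) :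
    Real.Gamma (s + 4) = (s + 3) * (s + 2) * (s + 1) * s * Real.Gamma s := by
  rw [show s + 4 = s + 3 + 1 by ring, Real.Gamma_add_one (by positivity),
    show s + 3 = s + 2 + 1 by ring, Real.Gamma_add_one (by positivity),
    show s + 2 = s + 1 + 1 by ring, Real.Gamma_add_one (by positivity), Real.Gamma_add_one hs.ne']
  ring

/-- There is a constant `C > 0` such that for every `σ ≥ 2`,
`∫_{-∞}^{∞} |Γ(σ + 2 + it)| dt ≤ C σ³ Γ(σ)`. -/
theorem gamma_vertical_integral_bound :
    ∃ C : ℝ, 0 < C ∧ ∀ σ : ℝ, 2 ≤ σ →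
      (∫ t : ℝ, ‖Complex.Gamma ((σ : ℂ) + 2 + t * Complex.I)‖) ≤
        C * σ ^ 3 * Real.Gamma σ := by
  refine ⟨4 * π, by positivity, fun σ hσ ↦ ?_⟩
  have hσ0 : 0 < σ := by linarith
  have hpoly : (σ + 3) * (σ + 1) * σ ≤ 4 * σ ^ 3 := by
    nlinarith [mul_nonneg hσ0.le (mul_nonneg (sub_nonneg.2 hσ) (by linarith : (0 : ℝ) ≤ 3 * σ + 2))]
  calc ∫ t : ℝ, ‖Complex.Gamma ((σ : ℂ) + 2 + t * Complex.I)‖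
      = ∫ t : ℝ, ‖Complex.Gamma (((σ + 2 : ℝ) : ℂ) + t * Complex.I)‖ := by push_cast; rfl
    _ ≤ Real.Gamma (σ + 2 + 2) * (π / (σ + 2)) :=
        Complex.integral_norm_Gamma_vertical_le (by positivity)
    _ = π * ((σ + 3) * (σ + 1) * σ) * Real.Gamma σ := by
        rw [show σ + 2 + 2 = σ + 4 by ring, Real.Gamma_add_four hσ0]
        field_simp
    _ ≤ π * (4 * σ ^ 3) * Real.Gamma σ := by gcongr
    _ = 4 * π * σ ^ 3 * Real.Gamma σ := by ring
end

section
/- (Carlson) Let f : ℂ → ℂ be entire, and suppose there are constants B, k > 0 with |f(z)| ≤ B e^{k|z|} for all z ∈ ℂ, and constants M > 0, a > 0 with |f(x)| ≤ M e^{−a|x|} for all real x. Then f(z) = 0 for all z ∈ ℂ. -/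
/-!
Phragmén–Lindelöf in the first quadrant, applied to `f(z) e^{(a + i(k + a))z}` (bounded by `M` on
`ℝ₊` and by `B` on `iℝ₊`), together with the reflections `z ↦ -z` and `z ↦ z̄`, gives
`|f(x + iy)| ≤ C e^{-a|x| + (k + a)|y|}`. Hence the Fourier–Laplace transform
`F(ζ) = ∫ e^{-iζx} f(x) dx` is holomorphic in the strip `|Im ζ| < a`, and for real `ξ > k + a`
shifting the line of integration to `Im z = t`, `t → -∞`, shows `F(ξ) = 0`. By the identity
theorem `F` vanishes on the strip, so the Fourier transform of `f` on `ℝ` vanishes; Fourier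
inversion gives `f = 0` on `ℝ`, and the identity theorem once more gives `f = 0`.
-/

open Complex MeasureTheory Filter Set Topology
open scoped Real FourierTransform ComplexConjugate

theorem integrable_exp_neg_mul_abs {b : ℝ} (hb : 0 < b) :
    Integrable fun x : ℝ => rexp (-b * |x|) := by
  rw [← integrableOn_univ, ← Iic_union_Ioi (a := 0)]
  refine IntegrableOn.union ?_ ?_
  · refine (integrableOn_exp_mul_Iic hb 0).congr_fun (fun x hx => ?_) measurableSet_Iic
    simp [abs_of_nonpos (mem_Iic.1 hx)]
  · refine (integrableOn_exp_mul_Ioi (neg_lt_zero.2 hb) 0).congr_fun (fun x hx => ?_)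
      measurableSet_Ioi
    simp [abs_of_pos (mem_Ioi.1 hx)]

theorem integrable_of_norm_le_exp_neg_mul_abs {E : Type*} [NormedAddCommGroup E] {g : ℝ → E}
    (hg : Continuous g) {K b : ℝ} (hb : 0 < b) (h : ∀ x, ‖g x‖ ≤ K * rexp (-b * |x|)) :
    Integrable g :=
  ((integrable_exp_neg_mul_abs hb).const_mul K).mono' hg.aestronglyMeasurable (.of_forall h)

theorem AnalyticOnNhd.eqOn_zero_of_forall_ofReal_gt {F : ℂ → ℂ} {U : Set ℂ}
    (hF : AnalyticOnNhd ℂ F U) (hU : IsPreconnected U) {x₀ : ℝ} (hx₀ : (x₀ : ℂ) ∈ U)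
    (h : ∀ x : ℝ, x₀ < x → F x = 0) : EqOn F 0 U := by
  refine hF.eqOn_zero_of_preconnected_of_frequently_eq_zero hU hx₀ ?_
  have hofReal : Tendsto ((↑) : ℝ → ℂ) (𝓝[Ioi x₀] x₀) (𝓝[≠] (x₀ : ℂ)) :=
    continuous_ofReal.continuousWithinAt.tendsto_nhdsWithin fun x hx => by
      simpa using (mem_Ioi.1 hx).ne'
  exact hofReal.frequently (eventually_nhdsWithin_of_forall (s := Ioi x₀) h).frequently

theorem eq_zero_of_fourier_eq_zero {V E : Type*} [NormedAddCommGroup V] [InnerProductSpace ℝ V]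
    [FiniteDimensional ℝ V] [MeasurableSpace V] [BorelSpace V]
    [NormedAddCommGroup E] [NormedSpace ℂ E] [CompleteSpace E] {g : V → E}
    (hg : Continuous g) (hi : Integrable g) (h : 𝓕 g = 0) : g = 0 := by
  rw [← hg.fourierInv_fourier_eq hi (by rw [h]; exact integrable_zero _ _ _), h]
  ext
  simp [Real.fourierInv_eq]

structure ExpTypeDecay (f : ℂ → ℂ) (B k M a : ℝ) : Prop where
  differentiable : Differentiable ℂ f
  norm_le : ∀ z : ℂ, ‖f z‖ ≤ B * rexp (k * ‖z‖)
  norm_ofReal_le : ∀ x : ℝ, ‖f x‖ ≤ M * rexp (-a * |x|)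

namespace ExpTypeDecay

variable {f : ℂ → ℂ} {B k M a : ℝ}

theorem comp_neg (h : ExpTypeDecay f B k M a) : ExpTypeDecay (fun z => f (-z)) B k M a where
  differentiable := h.differentiable.comp differentiable_neg
  norm_le z := by simpa using h.norm_le (-z)
  norm_ofReal_le x := by simpa using h.norm_ofReal_le (-x)

theorem conj_conj (h : ExpTypeDecay f B k M a) : ExpTypeDecay (conj ∘ f ∘ conj) B k M a where
  differentiable z := differentiableAt_conj_conj_iff.2 (h.differentiable _)
  norm_le z := by simpa using h.norm_le (conj z)
  norm_ofReal_le x := by simpa using h.norm_ofReal_le x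

theorem norm_le_of_re_nonneg_of_im_nonneg (h : ExpTypeDecay f B k M a) (ha : 0 ≤ a) {z : ℂ}
    (hre : 0 ≤ z.re) (him : 0 ≤ z.im) :
    ‖f z‖ ≤ max B M * rexp (-a * z.re + (k + a) * z.im) := by
  have hB : 0 ≤ B :=
    nonneg_of_mul_nonneg_left ((norm_nonneg _).trans (h.norm_le 0)) (Real.exp_pos _)
  set w : ℂ := a + (k + a : ℝ) * I
  have hnorm : ∀ z, ‖f z * cexp (w * z)‖ = ‖f z‖ * rexp (a * z.re - (k + a) * z.im) := by
    intro z
    rw [norm_mul, norm_exp]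
    simp [w]
  have hbounded : ‖f z * cexp (w * z)‖ ≤ max B M := by
    refine PhragmenLindelof.quadrant_I (f := fun z => f z * cexp (w * z)) ?_ ?_ ?_ ?_ hre him
    · exact (h.differentiable.mul (differentiable_id.const_mul w).cexp).diffContOnCl
    · refine ⟨1, one_lt_two, k + ‖w‖, .of_bound B (.of_forall fun z => ?_)⟩
      rw [Real.rpow_one, Real.norm_of_nonneg (Real.exp_pos _).le, norm_mul, norm_exp, add_mul k,
        Real.exp_add, ← mul_assoc]
      gcongr
      · exact h.norm_le z
      · exact (re_le_norm _).trans (norm_mul w z).le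
    · intro x hx
      rw [hnorm]
      simp only [ofReal_re, ofReal_im, mul_zero, sub_zero]
      calc ‖f x‖ * rexp (a * x) ≤ M * rexp (-a * |x|) * rexp (a * x) := by
            gcongr; exact h.norm_ofReal_le x
        _ = M := by rw [abs_of_nonneg hx, mul_assoc, ← Real.exp_add]; simp
        _ ≤ max B M := le_max_right _ _
    · intro y hy
      rw [hnorm]
      simp only [mul_I_re, mul_I_im, ofReal_re, ofReal_im, neg_zero, mul_zero, zero_sub]
      calc ‖f (y * I)‖ * rexp (-((k + a) * y)) ≤ B * rexp (k * y) * rexp (-((k + a) * y)) := by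
            gcongr; simpa [abs_of_nonneg hy] using h.norm_le (y * I)
        _ = B * rexp (-(a * y)) := by rw [mul_assoc, ← Real.exp_add]; ring_nf
        _ ≤ B := mul_le_of_le_one_right hB (Real.exp_le_one_iff.2 (by nlinarith))
        _ ≤ max B M := le_max_left _ _
  calc ‖f z‖ = ‖f z * cexp (w * z)‖ * rexp (-a * z.re + (k + a) * z.im) := by
        rw [hnorm, mul_assoc, ← Real.exp_add]; ring_nf; simp
    _ ≤ max B M * rexp (-a * z.re + (k + a) * z.im) := by gcongr

theorem norm_le_mul_exp_abs_re_abs_im (h : ExpTypeDecay f B k M a) (ha : 0 ≤ a) (z : ℂ) :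
    ‖f z‖ ≤ max B M * rexp (-a * |z.re| + (k + a) * |z.im|) := by
  rcases le_total 0 z.re with hre | hre <;> rcases le_total 0 z.im with him | him
  · simpa [abs_of_nonneg hre, abs_of_nonneg him] using
      h.norm_le_of_re_nonneg_of_im_nonneg ha hre him
  · simpa [abs_of_nonneg hre, abs_of_nonpos him] using
      h.conj_conj.norm_le_of_re_nonneg_of_im_nonneg ha (z := conj z) (by simpa) (by simpa)
  · simpa [abs_of_nonpos hre, abs_of_nonneg him] using
      h.comp_neg.conj_conj.norm_le_of_re_nonneg_of_im_nonneg ha (z := -conj z) (by simpa)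
        (by simpa)
  · simpa [abs_of_nonpos hre, abs_of_nonpos him] using
      h.comp_neg.norm_le_of_re_nonneg_of_im_nonneg ha (z := -z) (by simpa) (by simpa)

end ExpTypeDecay

theorem integral_add_mul_I_eq_integral {E : Type*} [NormedAddCommGroup E] [NormedSpace ℂ E]
    [CompleteSpace E] {g : ℂ → E} (hg : Differentiable ℂ g) {K b y : ℝ} (hb : 0 < b)
    (hbound : ∀ x : ℝ, ∀ t ∈ uIcc 0 y, ‖g (x + t * I)‖ ≤ K * rexp (-b * |x|)) :
    ∫ x : ℝ, g (x + y * I) = ∫ x : ℝ, g x := by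
  have hline : ∀ t ∈ uIcc 0 y, Tendsto (fun R : ℝ => ∫ x in -R..R, g (x + t * I)) atTop
      (𝓝 (∫ x : ℝ, g (x + t * I))) := fun t ht =>
    intervalIntegral_tendsto_integral
      (integrable_of_norm_le_exp_neg_mul_abs (hg.continuous.comp (by fun_prop)) hb
        fun x => hbound x t ht)
      tendsto_neg_atTop_atBot tendsto_id
  have hside : ∀ σ : ℝ, ‖∫ t in 0..y, g (σ + t * I)‖ ≤ K * rexp (-b * |σ|) * |y - 0| :=
    fun σ => intervalIntegral.norm_integral_le_of_norm_le_const fun t ht =>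
      hbound σ t (uIoc_subset_uIcc ht)
  have hside_lim : Tendsto (fun R : ℝ => K * rexp (-b * R) * |y - 0|) atTop (𝓝 0) := by
    simpa using ((Real.tendsto_exp_atBot.comp
      (tendsto_id.const_mul_atTop_of_neg (neg_lt_zero.2 hb))).const_mul K).mul_const |y - 0|
  have hright : Tendsto (fun R : ℝ => ∫ t in 0..y, g (R + t * I)) atTop (𝓝 0) :=
    squeeze_zero_norm' ((eventually_ge_atTop 0).mono fun R hR => by
      simpa [abs_of_nonneg hR] using hside R) hside_lim
  have hleft : Tendsto (fun R : ℝ => ∫ t in 0..y, g (-R + t * I)) atTop (𝓝 0) :=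
    squeeze_zero_norm' ((eventually_ge_atTop 0).mono fun R hR => by
      simpa [abs_of_nonneg hR] using hside (-R)) hside_lim
  have hrect : ∀ R : ℝ, (∫ x in -R..R, g (x + ((0 : ℝ) : ℂ) * I)) -
      (∫ x in -R..R, g (x + y * I)) + I • (∫ t in 0..y, g (R + t * I)) -
      I • (∫ t in 0..y, g (-R + t * I)) = 0 := fun R => by
    simpa using integral_boundary_rect_eq_zero_of_differentiableOn g (-R) (R + y * I)
      hg.differentiableOn
  have hlim := (((hline 0 left_mem_uIcc).sub (hline y right_mem_uIcc)).add
    (hright.const_smul I)).sub (hleft.const_smul I)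
  rw [funext hrect, smul_zero, add_zero, sub_zero] at hlim
  simpa using (sub_eq_zero.1 (tendsto_nhds_unique hlim tendsto_const_nhds)).symm

/-- Unlike `𝓕`, the frequency is not normalized by `2π`: see `fourier_eq_fourierLaplace`. -/
noncomputable def fourierLaplace (g : ℝ → ℂ) (ζ : ℂ) : ℂ :=
  ∫ x : ℝ, cexp (-(I * ζ * x)) * g x

theorem fourier_eq_fourierLaplace (g : ℝ → ℂ) (w : ℝ) :
    𝓕 g w = fourierLaplace g (2 * π * w) := by
  rw [Real.fourier_real_eq_integral_exp_smul, fourierLaplace]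
  congr 1 with x
  rw [smul_eq_mul]
  push_cast
  ring_nf

theorem norm_cexp_neg_I_mul_mul_ofReal (ζ : ℂ) (x : ℝ) :
    ‖cexp (-(I * ζ * x))‖ = rexp (ζ.im * x) := by
  simp [norm_exp]

theorem norm_cexp_neg_I_mul_mul_ofReal_le (ζ : ℂ) (x : ℝ) :
    ‖cexp (-(I * ζ * x))‖ ≤ rexp (|ζ.im| * |x|) := by
  rw [norm_cexp_neg_I_mul_mul_ofReal, ← abs_mul]
  exact Real.exp_le_exp.2 (le_abs_self _)

section Strip

variable {g : ℝ → ℂ} {M a : ℝ}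

theorem norm_cexp_mul_le_of_norm_le (hdecay : ∀ x, ‖g x‖ ≤ M * rexp (-a * |x|)) (ζ : ℂ)
    (x : ℝ) :
    ‖cexp (-(I * ζ * x)) * g x‖ ≤ M * rexp (-(a - |ζ.im|) * |x|) := by
  calc ‖cexp (-(I * ζ * x)) * g x‖ ≤ rexp (|ζ.im| * |x|) * (M * rexp (-a * |x|)) := by
        rw [norm_mul]; gcongr; exacts [norm_cexp_neg_I_mul_mul_ofReal_le ζ x, hdecay x]
    _ = M * rexp (-(a - |ζ.im|) * |x|) := by rw [mul_left_comm, ← Real.exp_add]; ring_nf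

theorem differentiableOn_fourierLaplace (hg : Continuous g)
    (hdecay : ∀ x, ‖g x‖ ≤ M * rexp (-a * |x|)) :
    DifferentiableOn ℂ (fourierLaplace g) {ζ | |ζ.im| < a} := by
  intro ζ₀ hζ₀
  obtain ⟨ε, hε, hεa⟩ : ∃ ε > 0, |ζ₀.im| + 4 * ε = a :=
    ⟨(a - |ζ₀.im|) / 4, by linarith [show |ζ₀.im| < a from hζ₀], by ring⟩
  have hball : ∀ ζ ∈ Metric.ball ζ₀ ε, |ζ.im| ≤ a - 3 * ε := fun ζ hζ => by
    have := (abs_im_le_norm (ζ - ζ₀)).trans (mem_ball_iff_norm.1 hζ).le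
    rw [sub_im] at this
    linarith [abs_sub_abs_le_abs_sub ζ.im ζ₀.im]
  refine (hasDerivAt_integral_of_dominated_loc_of_deriv_le
    (F := fun ζ x => cexp (-(I * ζ * x)) * g x)
    (F' := fun ζ x => cexp (-(I * ζ * x)) * (-(I * x)) * g x)
    (bound := fun x => M / ε * rexp (-(2 * ε) * |x|)) (Metric.ball_mem_nhds ζ₀ hε)
    (.of_forall fun ζ => (by fun_prop : Continuous _).aestronglyMeasurable) ?_
    (by fun_prop : Continuous _).aestronglyMeasurable (.of_forall fun x ζ hζ => ?_)
    ((integrable_exp_neg_mul_abs (by positivity)).const_mul _)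
    (.of_forall fun x ζ _ => ?_)).2.differentiableAt.differentiableWithinAt
  · exact integrable_of_norm_le_exp_neg_mul_abs (by fun_prop) (by simpa using hζ₀)
      (norm_cexp_mul_le_of_norm_le hdecay ζ₀)
  · have hxexp : |x| ≤ ε⁻¹ * rexp (ε * |x|) := by
      rw [le_inv_mul_iff₀ hε]
      linarith [Real.add_one_le_exp (ε * |x|)]
    have hM : 0 ≤ M :=
      nonneg_of_mul_nonneg_left ((norm_nonneg _).trans (hdecay 0)) (Real.exp_pos _)
    calc ‖cexp (-(I * ζ * x)) * (-(I * x)) * g x‖ = |x| * ‖cexp (-(I * ζ * x)) * g x‖ := by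
          rw [mul_right_comm, norm_mul, mul_comm]; simp
      _ ≤ ε⁻¹ * rexp (ε * |x|) * (M * rexp (-(3 * ε) * |x|)) := by
          gcongr
          refine (norm_cexp_mul_le_of_norm_le hdecay ζ x).trans ?_
          gcongr
          linarith [hball ζ hζ]
      _ = M / ε * rexp (-(2 * ε) * |x|) := by
          rw [mul_mul_mul_comm, ← Real.exp_add]; ring_nf
  · simpa using (((hasDerivAt_id ζ).const_mul I).mul_const (x : ℂ)).neg.cexp.mul_const (g x)

end Strip

section QuadrantBound

variable {f : ℂ → ℂ} {C a c : ℝ}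

theorem norm_cexp_mul_le_of_quadrant_bound
    (hbound : ∀ z, ‖f z‖ ≤ C * rexp (-a * |z.re| + c * |z.im|)) (ξ x t : ℝ) :
    ‖cexp (-(I * ξ * (x + t * I))) * f (x + t * I)‖ ≤
      C * rexp (ξ * t + c * |t|) * rexp (-a * |x|) := by
  have hre : (-(I * ξ * (x + t * I))).re = ξ * t := by simp
  calc ‖cexp (-(I * ξ * (x + t * I))) * f (x + t * I)‖
      ≤ rexp (ξ * t) * (C * rexp (-a * |x| + c * |t|)) := by
        rw [norm_mul, norm_exp, hre]; gcongr; simpa using hbound (x + t * I)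
    _ = C * rexp (ξ * t + c * |t|) * rexp (-a * |x|) := by
        simp only [Real.exp_add]; ring

theorem norm_fourierLaplace_le (hf : Differentiable ℂ f) (ha : 0 < a)
    (hbound : ∀ z, ‖f z‖ ≤ C * rexp (-a * |z.re| + c * |z.im|)) (ξ t : ℝ) :
    ‖fourierLaplace (fun x => f x) ξ‖ ≤
      C * rexp (ξ * t + c * |t|) * ∫ x : ℝ, rexp (-a * |x|) := by
  have hC : 0 ≤ C :=
    nonneg_of_mul_nonneg_left ((norm_nonneg _).trans (hbound 0)) (Real.exp_pos _)
  have hshift : ∫ x : ℝ, cexp (-(I * ξ * (x + t * I))) * f (x + t * I) =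
      fourierLaplace (fun x => f x) ξ := by
    refine (integral_add_mul_I_eq_integral (g := fun z => cexp (-(I * ξ * z)) * f z)
      (K := C * rexp ((|ξ| + |c|) * |t|)) (by fun_prop) ha fun x s hs => ?_).trans
      (by simp [fourierLaplace])
    refine (norm_cexp_mul_le_of_quadrant_bound hbound ξ x s).trans ?_
    have hst : |s| ≤ |t| := by simpa using abs_sub_left_of_mem_uIcc hs
    gcongr
    have hξs : ξ * s ≤ |ξ| * |s| := abs_mul ξ s ▸ le_abs_self _
    nlinarith [le_abs_self c, abs_nonneg s, abs_nonneg ξ, abs_nonneg c]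
  rw [← hshift, ← integral_const_mul]
  exact norm_integral_le_of_norm_le ((integrable_exp_neg_mul_abs ha).const_mul _)
    (.of_forall (norm_cexp_mul_le_of_quadrant_bound hbound ξ · t))

theorem fourierLaplace_eq_zero_of_lt (hf : Differentiable ℂ f) (ha : 0 < a)
    (hbound : ∀ z, ‖f z‖ ≤ C * rexp (-a * |z.re| + c * |z.im|)) {ξ : ℝ} (hξ : c < ξ) :
    fourierLaplace (fun x => f x) ξ = 0 := by
  refine norm_le_zero_iff.1 (ge_of_tendsto ?_
    ((eventually_le_atBot 0).mono fun t ht => norm_fourierLaplace_le hf ha hbound ξ t))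
  have hexponent : Tendsto (fun t : ℝ => ξ * t + c * |t|) atBot atBot :=
    (tendsto_id.const_mul_atBot (sub_pos.2 hξ)).congr' <| (eventually_le_atBot 0).mono
      fun t ht => by simp only [id, abs_of_nonpos ht]; ring
  simpa using ((Real.tendsto_exp_atBot.comp hexponent).const_mul C).mul_const
    (∫ x : ℝ, rexp (-a * |x|))

end QuadrantBound

theorem carlson_exponential_decay_general (f : ℂ → ℂ) (hf : Differentiable ℂ f)
    (B k : ℝ)
    (hgrowth : ∀ z : ℂ, ‖f z‖ ≤ B * Real.exp (k * ‖z‖))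
    (M a : ℝ) (ha : 0 < a)
    (hdecay : ∀ x : ℝ, ‖f x‖ ≤ M * Real.exp (-a * |x|)) :
    ∀ z : ℂ, f z = 0 := by
  have hquadrant := (ExpTypeDecay.mk hf hgrowth hdecay).norm_le_mul_exp_abs_re_abs_im ha.le
  have hg : Continuous fun x : ℝ => f x := hf.continuous.comp continuous_ofReal
  have hstrip : IsPreconnected {ζ : ℂ | |ζ.im| < a} := by
    simpa only [abs_lt, ofPred_and] using
      ((convex_halfSpace_im_gt _).inter (convex_halfSpace_im_lt _)).isPreconnected
  have hF : EqOn (fourierLaplace fun x => f x) 0 {ζ | |ζ.im| < a} :=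
    ((differentiableOn_fourierLaplace hg hdecay).analyticOnNhd
      (isOpen_lt (by fun_prop) continuous_const)).eqOn_zero_of_forall_ofReal_gt hstrip
      (x₀ := k + a) (by simpa using ha) fun _ hξ => fourierLaplace_eq_zero_of_lt hf ha hquadrant hξ
  have hreal : (fun x : ℝ => f x) = 0 :=
    eq_zero_of_fourier_eq_zero hg (integrable_of_norm_le_exp_neg_mul_abs hg ha hdecay) <|
      funext fun w => by rw [fourier_eq_fourierLaplace]; exact hF (by simpa using ha)
  intro z
  exact (hf.differentiableOn.analyticOnNhd isOpen_univ).eqOn_zero_of_forall_ofReal_gt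
    isPreconnected_univ (x₀ := 0) (mem_univ _) (fun x _ => congrFun hreal x) (mem_univ z)

/-- **Carlson's theorem** (as used by Beurling): an entire function of exponential type
that decays exponentially on the real axis vanishes identically. -/
theorem carlson_exponential_decay (f : ℂ → ℂ) (hf : Differentiable ℂ f)
    (B k : ℝ) (hB : 0 < B) (hk : 0 < k)
    (hgrowth : ∀ z : ℂ, ‖f z‖ ≤ B * Real.exp (k * ‖z‖))
    (M a : ℝ) (hM : 0 < M) (ha : 0 < a)
    (hdecay : ∀ x : ℝ, ‖f x‖ ≤ M * Real.exp (-a * |x|)) :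
    ∀ z : ℂ, f z = 0 :=
  carlson_exponential_decay_general f hf B k hgrowth M a ha hdecay
end

section
/- For every complex number s with 0 < Re(s) < 2, ∫_0^∞ log(1 + x^2) · x^{−1−s} dx = π/(s · sin(πs/2)). -/
open Complex Real
open MeasureTheory Set Filter Topology Asymptotics

/-!
Integrating by parts against `x ^ (-s)` turns the integral into `(2 / s) ∫₀^∞ x ^ (1 - s) / (1 + x²) dx`,
i.e. `2 / s` times the Mellin transform of `1 / (1 + x²)` at `2 - s`. The substitution `u = x²`
reduces that to the Mellin transform of `1 / (1 + u)` at `1 - s / 2`, and the substitution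
`u = t / (1 - t)` identifies the latter with `B(c, 1 - c) = Γ(c) Γ(1 - c) = π / sin (π c)`.
The boundary terms vanish because `log (1 + x²)` is `O(x²)` at `0` and `O(x ^ ε)` at `∞`.
-/

theorem image_div_one_sub_Ioo : (fun t : ℝ ↦ t / (1 - t)) '' Ioo 0 1 = Ioi 0 := by
  ext u
  refine ⟨fun ⟨t, ⟨ht0, ht1⟩, hu⟩ ↦ hu ▸ div_pos ht0 (sub_pos.2 ht1), fun hu ↦ ?_⟩
  have hu1 : 0 < 1 + u := by linarith [mem_Ioi.1 hu]
  refine ⟨u / (1 + u), ⟨div_pos hu hu1, (div_lt_one hu1).2 (by linarith)⟩, ?_⟩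
  field_simp
  ring

theorem injOn_div_one_sub_Ioo : InjOn (fun t : ℝ ↦ t / (1 - t)) (Ioo 0 1) := by
  rintro a ⟨-, ha1⟩ b ⟨-, hb1⟩ h
  rw [div_eq_div_iff (by linarith) (by linarith)] at h
  linarith

theorem hasDerivAt_div_one_sub {t : ℝ} (ht : t ≠ 1) :
    HasDerivAt (fun t : ℝ ↦ t / (1 - t)) (((1 - t)⁻¹) ^ 2) t := by
  have h1t : 1 - t ≠ 0 := sub_ne_zero.2 ht.symm
  refine ((hasDerivAt_id' t).div ((hasDerivAt_id' t).const_sub 1) h1t).congr_deriv ?_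
  field_simp
  ring

theorem mellin_inv_one_add {c : ℂ} (hc0 : 0 < c.re) (hc1 : c.re < 1) :
    mellin (fun u : ℝ ↦ (1 + (u : ℂ))⁻¹) c = π / sin (π * c) := by
  have hderiv : ∀ t ∈ Ioo (0 : ℝ) 1,
      HasDerivWithinAt (fun t : ℝ ↦ t / (1 - t)) (((1 - t)⁻¹) ^ 2) (Ioo 0 1) t :=
    fun t ht ↦ (hasDerivAt_div_one_sub ht.2.ne).hasDerivWithinAt
  have hintegrand : ∀ t ∈ Ioo (0 : ℝ) 1,
      |((1 - t)⁻¹) ^ 2| • (((t / (1 - t) : ℝ) : ℂ) ^ (c - 1) • (1 + ((t / (1 - t) : ℝ) : ℂ))⁻¹) =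
        (t : ℂ) ^ (c - 1) * (1 - (t : ℂ)) ^ ((1 - c) - 1) := by
    rintro t ⟨ht0, ht1⟩
    have h1t : 0 < 1 - t := sub_pos.2 ht1
    have h1tC : (1 - t : ℂ) = ((1 - t : ℝ) : ℂ) := by push_cast; ring
    have hne : (1 - t : ℂ) ≠ 0 := h1tC ▸ ofReal_ne_zero.2 h1t.ne'
    rw [abs_of_nonneg (by positivity), ofReal_div, div_cpow_ofReal_nonneg ht0.le h1t.le,
      show (1 - c) - 1 = -(c - 1) - 1 by ring, cpow_sub _ _ hne, cpow_neg, cpow_one, ← h1tC]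
    have : (1 - t : ℂ) ^ (c - 1) ≠ 0 := by simp [cpow_eq_zero_iff, hne]
    simp only [real_smul, smul_eq_mul]
    push_cast
    field_simp
    ring
  have hbeta : betaIntegral c (1 - c) = π / sin (π * c) := by
    have h := Gamma_mul_Gamma_eq_betaIntegral hc0 (by simpa using hc1 : 0 < (1 - c).re)
    rwa [add_sub_cancel, Complex.Gamma_one, one_mul, Complex.Gamma_mul_Gamma_one_sub, eq_comm] at h
  rw [mellin, ← image_div_one_sub_Ioo,
    integral_image_eq_integral_abs_deriv_smul measurableSet_Ioo hderiv injOn_div_one_sub_Ioo,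
    setIntegral_congr_fun measurableSet_Ioo hintegrand, ← hbeta, betaIntegral,
    intervalIntegral.integral_of_le zero_le_one, integral_Ioc_eq_integral_Ioo]

theorem mellinConvergent_inv_one_add_sq {s : ℂ} (h0 : 0 < s.re) (h2 : s.re < 2) :
    MellinConvergent (fun x : ℝ ↦ (1 + (x : ℂ) ^ 2)⁻¹) s := by
  have hcast : (fun x : ℝ ↦ (1 + (x : ℂ) ^ 2)⁻¹) = fun x : ℝ ↦ (((1 + x ^ 2)⁻¹ : ℝ) : ℂ) := by
    ext x; push_cast; rfl
  have hcont : Continuous fun x : ℝ ↦ (1 + x ^ 2)⁻¹ :=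
    (continuous_const.add (continuous_pow 2)).inv₀ fun x ↦ (by positivity : (0 : ℝ) < 1 + x ^ 2).ne'
  rw [hcast]
  refine mellinConvergent_of_isBigO_rpow (a := 2) (b := 0)
    ((continuous_ofReal.comp hcont).locallyIntegrable.locallyIntegrableOn _) ?_ h2 ?_ h0
  all_goals rw [isBigO_ofReal_left]
  · refine isBigO_iff.2 ⟨1, ?_⟩
    filter_upwards [eventually_gt_atTop 0] with x hx
    rw [one_mul, Real.norm_of_nonneg (by positivity), Real.norm_of_nonneg (by positivity),
      rpow_neg hx.le, rpow_two]
    exact inv_anti₀ (by positivity) (by linarith)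
  · refine isBigO_iff.2 ⟨1, Eventually.of_forall fun x ↦ ?_⟩
    rw [neg_zero, rpow_zero, one_mul, norm_one, Real.norm_of_nonneg (by positivity)]
    exact inv_le_one_of_one_le₀ (by nlinarith)

theorem mellin_inv_one_add_sq {s : ℂ} (h0 : 0 < s.re) (h2 : s.re < 2) :
    mellin (fun x : ℝ ↦ (1 + (x : ℂ) ^ 2)⁻¹) s = π / (2 * sin (π * s / 2)) := by
  have h := mellin_comp_rpow (fun u : ℝ ↦ (1 + (u : ℂ))⁻¹) s 2
  simp only [rpow_two, ofReal_pow] at h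
  rw [h, mellin_inv_one_add (by simpa using h0)
    (by rw [div_ofReal_re]; linarith)]
  simp only [abs_two, real_smul, mul_div_assoc]
  push_cast
  ring

theorem log_one_add_sq_nonneg (x : ℝ) : 0 ≤ Real.log (1 + x ^ 2) :=
  Real.log_nonneg (by nlinarith)

theorem log_one_add_sq_le_sq (x : ℝ) : Real.log (1 + x ^ 2) ≤ x ^ 2 := by
  linarith [log_le_sub_one_of_pos (by positivity : 0 < 1 + x ^ 2)]

theorem isBigO_log_one_add_sq_sq (l : Filter ℝ) :
    (fun x : ℝ ↦ Real.log (1 + x ^ 2)) =O[l] (· ^ (2 : ℝ)) := by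
  refine isBigO_of_le l fun x ↦ ?_
  rw [rpow_two, Real.norm_of_nonneg (log_one_add_sq_nonneg x), Real.norm_of_nonneg (sq_nonneg x)]
  exact log_one_add_sq_le_sq x

theorem isBigO_log_one_add_sq_atTop {ε : ℝ} (hε : 0 < ε) :
    (fun x : ℝ ↦ Real.log (1 + x ^ 2)) =O[atTop] (· ^ ε) := by
  refine isBigO_iff.2 ⟨2 ^ (ε / 2) / (ε / 2), ?_⟩
  filter_upwards [eventually_ge_atTop 1] with x hx
  have hx0 : 0 < x := one_pos.trans_le hx
  rw [Real.norm_of_nonneg (log_one_add_sq_nonneg x), Real.norm_of_nonneg (rpow_nonneg hx0.le _)]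
  calc Real.log (1 + x ^ 2) ≤ (1 + x ^ 2) ^ (ε / 2) / (ε / 2) :=
        log_le_rpow_div (by positivity) (by positivity)
    _ ≤ (2 * x ^ 2) ^ (ε / 2) / (ε / 2) := by gcongr; nlinarith
    _ = 2 ^ (ε / 2) / (ε / 2) * x ^ ε := by
        rw [mul_rpow zero_le_two (sq_nonneg x), ← rpow_natCast, ← rpow_mul hx0.le]
        ring_nf

theorem mellinConvergent_log_one_add_sq {s : ℂ} (h0 : -2 < s.re) (h2 : s.re < 0) :
    MellinConvergent (fun x : ℝ ↦ (Real.log (1 + x ^ 2) : ℂ)) s := by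
  have hcont : Continuous fun x : ℝ ↦ Real.log (1 + x ^ 2) :=
    (continuous_const.add (continuous_pow 2)).log fun x ↦ (by positivity : (0 : ℝ) < 1 + x ^ 2).ne'
  refine mellinConvergent_of_isBigO_rpow (a := s.re / 2) (b := -2)
    ((continuous_ofReal.comp hcont).locallyIntegrable.locallyIntegrableOn _) ?_ (by linarith) ?_ h0
  · rw [isBigO_ofReal_left]
    exact isBigO_log_one_add_sq_atTop (by linarith)
  · rw [isBigO_ofReal_left, neg_neg]
    exact isBigO_log_one_add_sq_sq _

theorem tendsto_cpow_mul_of_isBigO_rpow {l : Filter ℝ} (hl : ∀ᶠ t in l, 0 < t) {f : ℝ → ℂ}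
    {a : ℝ} (hf : f =O[l] (· ^ a)) (s : ℂ) (hlim : Tendsto (· ^ (s.re + a)) l (𝓝 0)) :
    Tendsto (fun t : ℝ ↦ (t : ℂ) ^ s * f t) l (𝓝 0) := by
  have hpow : (fun t : ℝ ↦ (t : ℂ) ^ s) =O[l] (· ^ s.re) :=
    isBigO_iff.2 ⟨1, by
      filter_upwards [hl] with t ht
      rw [norm_cpow_eq_rpow_re_of_pos ht, one_mul, Real.norm_of_nonneg (rpow_nonneg ht.le _)]⟩
  refine ((hpow.mul hf).congr' EventuallyEq.rfl ?_).trans_tendsto hlim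
  filter_upwards [hl] with t ht using (rpow_add ht _ _).symm

theorem mellin_add_one_of_hasDerivAt {f f' : ℝ → ℂ} {s : ℂ}
    (hf : ∀ t ∈ Ioi (0 : ℝ), HasDerivAt f (f' t) t)
    (hfs : MellinConvergent f s) (hf's : MellinConvergent f' (s + 1))
    (h_zero : Tendsto (fun t : ℝ ↦ (t : ℂ) ^ s * f t) (𝓝[>] 0) (𝓝 0))
    (h_top : Tendsto (fun t : ℝ ↦ (t : ℂ) ^ s * f t) atTop (𝓝 0)) :
    mellin f' (s + 1) = -s * mellin f s := by
  have hu : ∀ t ∈ Ioi (0 : ℝ), HasDerivAt (fun t : ℝ ↦ (t : ℂ) ^ s) (s * (t : ℂ) ^ (s - 1)) t :=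
    fun t ht ↦ (hasStrictDerivAt_cpow_const (ofReal_mem_slitPlane.2 ht)).hasDerivAt.comp_ofReal
  rw [MellinConvergent, add_sub_cancel_right] at hf's
  have hparts := integral_Ioi_mul_deriv_eq_deriv_mul hu hf hf's
    (by simpa only [Pi.mul_def, mul_assoc, smul_eq_mul, IntegrableOn] using hfs.const_mul s)
    h_zero h_top
  simp only [mellin, smul_eq_mul, add_sub_cancel_right, hparts, mul_assoc, integral_const_mul]
  ring

theorem hasDerivAt_log_one_add_sq (x : ℝ) :
    HasDerivAt (fun x : ℝ ↦ (Real.log (1 + x ^ 2) : ℂ)) (2 * x / (1 + (x : ℂ) ^ 2)) x := by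
  have hreal := ((hasDerivAt_pow 2 x).const_add 1).log (by positivity)
  refine hreal.ofReal_comp.congr_deriv ?_
  push_cast
  ring

theorem tendsto_cpow_neg_mul_log_one_add_sq_nhdsGT_zero {s : ℂ} (h2 : s.re < 2) :
    Tendsto (fun t : ℝ ↦ (t : ℂ) ^ (-s) * (Real.log (1 + t ^ 2) : ℂ)) (𝓝[>] 0) (𝓝 0) := by
  refine tendsto_cpow_mul_of_isBigO_rpow self_mem_nhdsWithin
    (isBigO_ofReal_left.2 (isBigO_log_one_add_sq_sq _)) (-s) ?_
  have hpos : 0 < (-s).re + 2 := by rw [neg_re]; linarith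
  have h := (continuousAt_rpow_const 0 _ (Or.inr hpos.le)).tendsto.mono_left
    (nhdsWithin_le_nhds (s := Ioi 0))
  rwa [zero_rpow hpos.ne'] at h

theorem tendsto_cpow_neg_mul_log_one_add_sq_atTop {s : ℂ} (h0 : 0 < s.re) :
    Tendsto (fun t : ℝ ↦ (t : ℂ) ^ (-s) * (Real.log (1 + t ^ 2) : ℂ)) atTop (𝓝 0) := by
  refine tendsto_cpow_mul_of_isBigO_rpow (eventually_gt_atTop 0)
    (isBigO_ofReal_left.2 (isBigO_log_one_add_sq_atTop (half_pos h0))) (-s) ?_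
  convert tendsto_rpow_neg_atTop (half_pos h0) using 3
  simp only [neg_re]
  ring

theorem mul_mellin_log_one_add_sq {s : ℂ} (h0 : 0 < s.re) (h2 : s.re < 2) :
    s * mellin (fun x : ℝ ↦ (Real.log (1 + x ^ 2) : ℂ)) (-s) =
      2 * mellin (fun x : ℝ ↦ (1 + (x : ℂ) ^ 2)⁻¹) (2 - s) := by
  have h2s : -s + 1 + 1 = 2 - s := by ring
  have hform : (fun x : ℝ ↦ 2 * (x : ℂ) / (1 + (x : ℂ) ^ 2)) =
      fun x : ℝ ↦ (x : ℂ) ^ (1 : ℂ) • (2 : ℂ) • (1 + (x : ℂ) ^ 2)⁻¹ := by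
    ext x
    rw [cpow_one, smul_eq_mul, smul_eq_mul]
    ring
  have hM : MellinConvergent (fun x : ℝ ↦ (1 + (x : ℂ) ^ 2)⁻¹) (2 - s) :=
    mellinConvergent_inv_one_add_sq (by simpa using h2) (by simpa using h0)
  have h := mellin_add_one_of_hasDerivAt (fun x _ ↦ hasDerivAt_log_one_add_sq x)
    (mellinConvergent_log_one_add_sq (by rw [neg_re]; linarith) (by simpa using h0))
    (by rw [hform, MellinConvergent.cpow_smul, h2s]; exact hM.const_smul (2 : ℂ))
    (tendsto_cpow_neg_mul_log_one_add_sq_nhdsGT_zero h2)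
    (tendsto_cpow_neg_mul_log_one_add_sq_atTop h0)
  rw [hform, mellin_cpow_smul, mellin_const_smul, h2s, neg_neg] at h
  rw [← h, smul_eq_mul]

/-- Mellin-transform identity: for `0 < Re(s) < 2`,
`∫_0^∞ log(1+x²) · x^{-1-s} dx = π / (s sin(πs/2))`. -/
theorem integral_log_one_add_sq_rpow (s : ℂ) (h0 : 0 < s.re) (h2 : s.re < 2) :
    ∫ x : ℝ in Set.Ioi (0 : ℝ),
        (Real.log (1 + x ^ 2) : ℂ) * (x : ℂ) ^ (-1 - s) =
      (Real.pi : ℂ) / (s * Complex.sin (Real.pi * s / 2)) := by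
  set L : ℝ → ℂ := fun x ↦ (Real.log (1 + x ^ 2) : ℂ)
  have hs : s ≠ 0 := by rintro rfl; simp at h0
  have hsin : sin (π * (2 - s) / 2) = sin (π * s / 2) := by
    rw [show π * (2 - s) / 2 = π - π * s / 2 by ring, Complex.sin_pi_sub]
  have h := mul_mellin_log_one_add_sq h0 h2
  rw [mellin_inv_one_add_sq (by simpa using h2) (by simpa using h0), hsin] at h
  calc _ = mellin L (-s) := by
        simp only [mellin, smul_eq_mul, L, mul_comm (Real.log _ : ℂ), show -1 - s = -s - 1 by ring]
    _ = s⁻¹ * (s * mellin L (-s)) := by field_simp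
    _ = _ := by rw [h]; ring
end

section
/- For every η > 0 and every ε > 0 there exists a sequence of positive real numbers r_m → ∞ such that max_{|s|=r_m} |ζ(s)| ≥ η · Γ(r_m)/(2π + ε)^{r_m} for all m. -/
open Filter Real

/-!
On the negative odd integers the cosine factor of the functional equation is `±1`, so
`|ζ(-n)| = 2 Γ(n + 1) ζ(n + 1) / (2π)^(n + 1) ≥ (n / π) · Γ(n) / (2π)^n`, using `ζ(n + 1) ≥ 1`.
The factor `n / π` eventually exceeds `η`, and `(2π)^n ≤ (2π + ε)^n`.
-/

lemma one_le_norm_riemannZeta_ofReal {x : ℝ} (hx : 1 < x) : 1 ≤ ‖riemannZeta x‖ := by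
  have hsum : Summable fun n : ℕ ↦ 1 / ((n : ℝ) + 1) ^ x := by
    simpa using (summable_nat_add_iff 1).mpr (Real.summable_one_div_nat_rpow.mpr hx)
  have hreal : riemannZeta x = ((∑' n : ℕ, 1 / ((n : ℝ) + 1) ^ x : ℝ) : ℂ) := by
    rw [zeta_eq_tsum_one_div_nat_add_one_cpow (by simpa using hx), Complex.ofReal_tsum]
    congr 1 with n
    rw [Complex.ofReal_div, Complex.ofReal_one, Complex.ofReal_cpow (by positivity)]
    push_cast
    rfl
  rw [hreal, Complex.norm_real, Real.norm_eq_abs]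
  calc (1 : ℝ) ≤ ∑' n : ℕ, 1 / ((n : ℝ) + 1) ^ x := by
        simpa using hsum.le_tsum 0 fun n _ ↦ by positivity
    _ ≤ _ := le_abs_self _

lemma norm_riemannZeta_neg {x : ℝ} (hx : 0 < x) :
    ‖riemannZeta (-x)‖ =
      2 * Gamma (x + 1) * |cos (π * (x + 1) / 2)| * ‖riemannZeta (x + 1 : ℝ)‖ /
        (2 * π) ^ (x + 1) := by
  have hs : ∀ n : ℕ, ((x + 1 : ℝ) : ℂ) ≠ -n := fun n h ↦ by
    have : x + 1 = -n := by exact_mod_cast h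
    linarith [n.cast_nonneg (α := ℝ)]
  have hs' : ((x + 1 : ℝ) : ℂ) ≠ 1 := fun h ↦ by
    have : x + 1 = 1 := by exact_mod_cast h
    linarith
  have h2π : (0 : ℝ) ≤ 2 * π := by positivity
  rw [show -(x : ℂ) = 1 - ((x + 1 : ℝ) : ℂ) by push_cast; ring, riemannZeta_one_sub hs hs',
    show 2 * (π : ℂ) = ((2 * π : ℝ) : ℂ) by push_cast; ring,
    show -((x + 1 : ℝ) : ℂ) = ((-(x + 1) : ℝ) : ℂ) by push_cast; ring,
    ← Complex.ofReal_cpow h2π, Complex.Gamma_ofReal,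
    show (π : ℂ) * ((x + 1 : ℝ) : ℂ) / 2 = ((π * (x + 1) / 2 : ℝ) : ℂ) by push_cast; ring,
    ← Complex.ofReal_cos]
  simp only [norm_mul, Complex.norm_real, Complex.norm_two, Real.norm_eq_abs,
    abs_of_pos (Gamma_pos_of_pos (by positivity : 0 < x + 1)), rpow_neg h2π, abs_inv,
    abs_of_pos (rpow_pos_of_pos (by positivity : (0 : ℝ) < 2 * π) (x + 1))]
  ring

lemma abs_cos_pi_mul_odd_add_one_div_two {n : ℕ} (hn : Odd n) :
    |cos (π * ((n : ℝ) + 1) / 2)| = 1 := by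
  obtain ⟨k, rfl⟩ := hn
  rw [show π * (((2 * k + 1 : ℕ) : ℝ) + 1) / 2 = (k + 1 : ℕ) * π by push_cast; ring,
    cos_nat_mul_pi, abs_pow, abs_neg, abs_one, one_pow]

lemma le_norm_riemannZeta_neg_odd {n : ℕ} (hn : Odd n) :
    n * Gamma n / (π * (2 * π) ^ (n : ℝ)) ≤ ‖riemannZeta (-n)‖ := by
  have hn0 : (0 : ℝ) < n := by exact_mod_cast hn.pos
  have hζ : 1 ≤ ‖riemannZeta ((n : ℝ) + 1 : ℝ)‖ := one_le_norm_riemannZeta_ofReal (by linarith)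
  have h2π : (0 : ℝ) < 2 * π := by positivity
  rw [← Complex.ofReal_natCast, norm_riemannZeta_neg hn0, abs_cos_pi_mul_odd_add_one_div_two hn,
    Gamma_add_one hn0.ne', rpow_add_one h2π.ne']
  rw [div_le_div_iff₀ (by positivity) (by positivity)]
  have hΓ : 0 < Gamma n := Gamma_pos_of_pos hn0
  have : 0 < (2 * π) ^ (n : ℝ) := rpow_pos_of_pos h2π _
  nlinarith [mul_le_mul_of_nonneg_left hζ (mul_pos (mul_pos (mul_pos hn0 hΓ) this) pi_pos).le]

/-- The growth bound `Γ(r)/(2π)^r` for `ζ` is sharp: for every `η, ε > 0` there is a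
sequence `r_m → ∞` with `max_{|s|=r_m} |ζ(s)| ≥ η · Γ(r_m)/(2π+ε)^{r_m}`. -/
theorem riemannZeta_circle_growth_sharp :
    ∀ η : ℝ, 0 < η → ∀ ε : ℝ, 0 < ε →
      ∃ r : ℕ → ℝ, (∀ m, 0 < r m) ∧ Tendsto r atTop atTop ∧
        ∀ m, ∃ s : ℂ, ‖s‖ = r m ∧
          η * Real.Gamma (r m) / (2 * Real.pi + ε) ^ (r m) ≤ ‖riemannZeta s‖ := by
  intro η _ ε hε
  obtain ⟨N, hN⟩ := exists_nat_ge (π * η)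
  set n : ℕ → ℕ := fun m ↦ 2 * (m + N) + 1
  refine ⟨fun m ↦ n m, fun m ↦ by positivity, ?_, fun m ↦ ⟨-(n m : ℂ), by simp, ?_⟩⟩
  · exact tendsto_natCast_atTop_atTop.comp <|
      tendsto_atTop_mono (fun m ↦ by simp only [n, id]; omega) tendsto_id
  have hηn : η ≤ n m / π := by
    rw [le_div_iff₀ pi_pos, mul_comm]
    exact hN.trans (by norm_cast; simp only [n]; omega)
  calc η * Gamma (n m) / (2 * π + ε) ^ (n m : ℝ)
      ≤ n m / π * Gamma (n m) / (2 * π) ^ (n m : ℝ) := by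
        gcongr
        linarith
    _ = n m * Gamma (n m) / (π * (2 * π) ^ (n m : ℝ)) := by ring
    _ ≤ ‖riemannZeta (-(n m))‖ := le_norm_riemannZeta_neg_odd ⟨m + N, rfl⟩
end
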